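/- Let x(t) be a nontrivial solution of the linear cyclic negative feedback system and suppose x(t₀) ∉ 𝒩. Then there exists ε₀ > 0 such that for all 0 < ε < ε₀ one has x(t₀ + ε) ∈ 𝒩, x(t₀ − ε) ∈ 𝒩, and N(x(t₀ + ε)) < N(x(t₀ − ε)). -/

import Mathlib

open Filter Topology

/-- δ₁ = −1 (index `0` in our 0-based indexing), δᵢ = 1 for the other indices. -/
def cyclicDelta (n : ℕ) [NeZero n] (i : Fin n) : ℝ := if i = 0 then -1 else 1

/-- The set Λ of vectors with all coordinates nonzero. -/
def cyclicLambda (n : ℕ) [NeZero n] : Set (Fin n → ℝ) := {x | ∀ i, x i ≠ 0}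

/-- The integer valued Lyapunov function `N(x) = card {i : δᵢ xᵢ x_{i−1} < 0}`
(cyclic indices, `x₀ = xₙ`). -/
noncomputable def cyclicN (n : ℕ) [NeZero n] (x : Fin n → ℝ) : ℕ :=
  Nat.card {i : Fin n // cyclicDelta n i * x i * x (i - 1) < 0}

/-- `N_m(x)`: the minimum of `N` over `U ∩ Λ` for all sufficiently small
neighborhoods `U` of `x`, i.e. the least value of `N` attained in every
neighborhood of `x` within `Λ`. -/
noncomputable def cyclicNm (n : ℕ) [NeZero n] (x : Fin n → ℝ) : ℕ :=
  sInf {k | ∃ᶠ y in 𝓝[cyclicLambda n] x, cyclicN n y = k}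

/-- `N_M(x)`: the maximum of `N` over `U ∩ Λ` for all sufficiently small
neighborhoods `U` of `x`. -/
noncomputable def cyclicNM (n : ℕ) [NeZero n] (x : Fin n → ℝ) : ℕ :=
  sSup {k | ∃ᶠ y in 𝓝[cyclicLambda n] x, cyclicN n y = k}

/-- The set 𝒩 on which `N` extends continuously. -/
def cyclicGood (n : ℕ) [NeZero n] : Set (Fin n → ℝ) :=
  {x | cyclicNm n x = cyclicNM n x}

/-- ñ = n if n is odd, n − 1 if n is even. -/
def ntilde (n : ℕ) : ℕ := if n % 2 = 1 then n else n - 1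

/-- A linear cyclic negative feedback system: coefficients `diag t i = a_{ii}(t)`
and `sub t i = a_{i,i−1}(t)` (cyclically, `sub t 0 = a_{1,n}(t)`), all continuous,
with `a_{1,n}(t) < 0` and `a_{i,i−1}(t) > 0` for `i ≠ 1`. -/
structure LinCNF (n : ℕ) [NeZero n] where
  diag : ℝ → Fin n → ℝ
  sub : ℝ → Fin n → ℝ
  cont_diag : ∀ i, Continuous fun t => diag t i
  cont_sub : ∀ i, Continuous fun t => sub t i
  sub_neg : ∀ t, sub t 0 < 0
  sub_pos : ∀ t (i : Fin n), i ≠ 0 → 0 < sub t i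

/-- `x` is a solution of the linear system `ẋᵢ = a_{ii}(t)xᵢ + a_{i,i−1}(t)x_{i−1}`. -/
def LinCNF.IsSolution {n : ℕ} [NeZero n] (S : LinCNF n) (x : ℝ → Fin n → ℝ) : Prop :=
  ∀ (t : ℝ) (i : Fin n),
    HasDerivAt (fun s => x s i) (S.diag t i * x t i + S.sub t i * x t (i - 1)) t

/-- `Φ` is the fundamental (matrix) solution, `Φ(0) = I`. -/
def LinCNF.IsFundamental {n : ℕ} [NeZero n] (S : LinCNF n)
    (Φ : ℝ → (Fin n → ℝ) →ₗ[ℝ] (Fin n → ℝ)) : Prop :=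
  Φ 0 = LinearMap.id ∧ ∀ x₀ : Fin n → ℝ, S.IsSolution fun t => Φ t x₀

/-- The cone `K_h = {0} ∪ {x : N_M(x) ≤ 2h − 1}`. -/
def Kcone (n : ℕ) [NeZero n] (h : ℕ) : Set (Fin n → ℝ) :=
  {0} ∪ {x | cyclicNM n x ≤ 2 * h - 1}

/-- The complementary cone `K^h = {0} ∪ {x : N_m(x) > 2h − 1}`. -/
def KconeUp (n : ℕ) [NeZero n] (h : ℕ) : Set (Fin n → ℝ) :=
  {0} ∪ {x | 2 * h - 1 < cyclicNm n x}

/-!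
Near `t₀`, a coordinate with `xᵢ(t₀) = 0` is driven by `x_{i−1}` alone, through a coupling of sign
`δᵢ`; by variation of constants the term `δᵢ xᵢ x_{i−1}` is then negative just before `t₀` and
positive just after, as long as `x_{i−1}` does not vanish there. Starting from a coordinate with
`xᵢ(t₀) ≠ 0` (uniqueness rules out `x(t₀) = 0`) this propagates around the cycle, so
`x(t₀ ± ε) ∈ Λ ⊆ 𝒩`. Comparing sign patterns with those of the points of `Λ` near `x(t₀)`,
`x(t₀ + ε)`, whose terms at the zero coordinates are all positive, has the least value of `N`
there, and `x(t₀ − ε)` the largest: `N(x(t₀ + ε)) ≤ N_m(x(t₀)) < N_M(x(t₀)) ≤ N(x(t₀ − ε))`.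
-/

open Set Real

lemma ite_sub_ite_le_of_mul_pos {a b p q : ℝ} (hpos : 0 < a * b * (p * q))
    (hflip : p < 0 → 0 < q → 0 < a) :
    (if p < 0 then 1 else 0 : ℤ) - (if q < 0 then 1 else 0)
      ≤ (if b < 0 then 1 else 0) - (if a < 0 then 1 else 0) := by
  rcases pos_and_pos_or_neg_and_neg_of_mul_pos hpos with ⟨hab, hpq⟩ | ⟨hab, hpq⟩ <;>
  split_ifs <;> first | omega | nlinarith | nlinarith [hflip ‹_› (by nlinarith)]

theorem Fin.forall_of_sub_one_imp {n : ℕ} [NeZero n] {P : Fin n → Prop} (i₀ : Fin n)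
    (h₀ : P i₀) (hstep : ∀ i, P (i - 1) → P i) : ∀ i, P i := by
  open scoped Fin.NatCast in
  have key : ∀ k : ℕ, P (i₀ + k) := by
    intro k
    induction k with
    | zero => simpa using h₀
    | succ k ih => exact hstep _ (by simpa [← add_assoc] using ih)
  intro i
  simpa using key (i - i₀).val

theorem IsPreconnected.mul_pos_of_ne_zero {α : Type*} [TopologicalSpace α] {s : Set α}
    {f : α → ℝ} (hs : IsPreconnected s) (hf : ContinuousOn f s) (h0 : ∀ x ∈ s, f x ≠ 0)
    {a b : α} (ha : a ∈ s) (hb : b ∈ s) : 0 < f a * f b := by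
  by_contra! hle
  obtain ⟨c, hc, hc0⟩ := hs.intermediate_value hb ha (continuousOn_const.mul hf)
    ⟨hle, (mul_self_pos.2 (h0 a ha)).le⟩
  exact h0 c hc ((mul_eq_zero.1 hc0).resolve_left (h0 a ha))

lemma mul_pos_of_mul_pos_of_mul_pos {a b c : ℝ} (ha : 0 < a * c) (hb : 0 < b * c) :
    0 < a * b :=
  pos_of_mul_pos_left (b := c * c) (by linarith [mul_pos ha hb]) (mul_self_nonneg c)

theorem eventually_mul_pos_nhds {ι : Type*} [Finite ι] (x₀ : ι → ℝ) :
    ∀ᶠ z in 𝓝 x₀, ∀ i, x₀ i ≠ 0 → 0 < z i * x₀ i := by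
  refine eventually_all.2 fun i => ?_
  by_cases hi : x₀ i = 0
  · simp [hi]
  · filter_upwards [((continuous_apply i).mul continuous_const).continuousAt.eventually
      (lt_mem_nhds (mul_self_pos.2 hi))] with z hz _ using hz

theorem exists_pos_forall_of_eventually_nhdsGT_nhdsLT {p q : ℝ → Prop} {a : ℝ}
    (hp : ∀ᶠ t in 𝓝[>] a, p t) (hq : ∀ᶠ t in 𝓝[<] a, q t) :
    ∃ ε₀ > 0, ∀ ε, 0 < ε → ε < ε₀ → p (a + ε) ∧ q (a - ε) := by
  obtain ⟨b, hb, hpb⟩ := mem_nhdsGT_iff_exists_Ioo_subset.1 hp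
  obtain ⟨c, hc, hqc⟩ := mem_nhdsLT_iff_exists_Ioo_subset.1 hq
  refine ⟨min (b - a) (a - c), lt_min (sub_pos.2 hb) (sub_pos.2 hc),
    fun ε hε hεε₀ => ⟨hpb ⟨?_, ?_⟩, hqc ⟨?_, ?_⟩⟩⟩ <;>
  linarith [min_le_left (b - a) (a - c), min_le_right (b - a) (a - c)]

theorem strictMonoOn_exp_neg_integral_mul {a y h : ℝ → ℝ} (ha : Continuous a)
    (hy : ∀ t, HasDerivAt y (a t * y t + h t) t) {D : Set ℝ} (hD : Convex ℝ D)
    (hh : ∀ t ∈ interior D, 0 < h t) :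
    StrictMonoOn (fun t => exp (-∫ s in (0 : ℝ)..t, a s) * y t) D := by
  have hF : ∀ t, HasDerivAt (fun t => exp (-∫ s in (0 : ℝ)..t, a s) * y t)
      (exp (-∫ s in (0 : ℝ)..t, a s) * h t) t := fun t => by
    have hexp : HasDerivAt (fun t => exp (-∫ s in (0 : ℝ)..t, a s))
        (exp (-∫ s in (0 : ℝ)..t, a s) * -a t) t :=
      (ha.integral_hasStrictDerivAt 0 t).hasDerivAt.neg.exp
    exact (hexp.mul (hy t)).congr_deriv (by ring)
  refine strictMonoOn_of_deriv_pos hD (HasDerivAt.continuousOn fun t _ => hF t) fun t ht => ?_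
  rw [(hF t).deriv]
  exact mul_pos (exp_pos _) (hh t ht)

theorem pos_of_hasDerivAt_linear {a y h : ℝ → ℝ} (ha : Continuous a)
    (hy : ∀ t, HasDerivAt y (a t * y t + h t) t) {t₀ t : ℝ} (hy₀ : y t₀ = 0) (ht : t₀ < t)
    (hh : ∀ s ∈ Ioo t₀ t, 0 < h s) : 0 < y t := by
  have := strictMonoOn_exp_neg_integral_mul ha hy (convex_Icc t₀ t) (by rwa [interior_Icc])
    (left_mem_Icc.2 ht.le) (right_mem_Icc.2 ht.le) ht
  simp only [hy₀, mul_zero] at this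
  exact pos_of_mul_pos_right this (exp_pos _).le

theorem neg_of_hasDerivAt_linear {a y h : ℝ → ℝ} (ha : Continuous a)
    (hy : ∀ t, HasDerivAt y (a t * y t + h t) t) {t₀ t : ℝ} (hy₀ : y t₀ = 0) (ht : t < t₀)
    (hh : ∀ s ∈ Ioo t t₀, 0 < h s) : y t < 0 := by
  have := strictMonoOn_exp_neg_integral_mul ha hy (convex_Icc t t₀) (by rwa [interior_Icc])
    (left_mem_Icc.2 ht.le) (right_mem_Icc.2 ht.le) ht
  simp only [hy₀, mul_zero] at this
  exact neg_of_mul_neg_right this (exp_pos _).le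

theorem forall_eventually_ne_zero_of_step {n : ℕ} [NeZero n] {x : ℝ → Fin n → ℝ}
    {l : Filter ℝ} {t₀ : ℝ} (hl : l ≤ 𝓝 t₀) (hx : ContinuousAt x t₀) (hx₀ : x t₀ ≠ 0)
    (hstep : ∀ i, x t₀ i = 0 → (∀ᶠ t in l, x t (i - 1) ≠ 0) → ∀ᶠ t in l, x t i ≠ 0) :
    ∀ i, ∀ᶠ t in l, x t i ≠ 0 := by
  have hcont : ∀ i, x t₀ i ≠ 0 → ∀ᶠ t in l, x t i ≠ 0 := fun i hi =>
    hl (((continuous_apply i).continuousAt.comp hx).eventually_ne hi)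
  obtain ⟨i₀, hi₀⟩ := Function.ne_iff.1 hx₀
  refine Fin.forall_of_sub_one_imp i₀ (hcont i₀ hi₀) fun i hprev => ?_
  by_cases hi : x t₀ i = 0
  exacts [hstep i hi hprev, hcont i hi]

section Counting

variable {n : ℕ} [NeZero n]

lemma cyclicDelta_mul_self (i : Fin n) : cyclicDelta n i * cyclicDelta n i = 1 := by
  unfold cyclicDelta; split_ifs <;> norm_num

lemma cyclicN_le (y : Fin n → ℝ) : cyclicN n y ≤ n :=
  (Finite.card_subtype_le _).trans (Nat.card_fin n).le

lemma cyclicN_eq_sum (y : Fin n → ℝ) :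
    (cyclicN n y : ℤ) = ∑ i, if cyclicDelta n i * y i * y (i - 1) < 0 then 1 else 0 := by
  classical
  rw [cyclicN, Nat.card_eq_fintype_card, Fintype.card_subtype, Finset.card_filter]
  push_cast
  rfl

/-- With `fᵢ = [uᵢ vᵢ < 0]`, each index satisfies `[δᵢ vᵢ v_{i−1} < 0] − [δᵢ uᵢ u_{i−1} < 0] ≥
fᵢ − f_{i−1}`, and the right-hand sides sum to zero around the cycle. -/
theorem cyclicN_le_cyclicN {u v : Fin n → ℝ} (hu : u ∈ cyclicLambda n) (hv : v ∈ cyclicLambda n)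
    (hflip : ∀ i, u i * v i < 0 → 0 < u (i - 1) * v (i - 1) →
      0 < cyclicDelta n i * u i * u (i - 1)) :
    cyclicN n u ≤ cyclicN n v := by
  set f : Fin n → ℤ := fun i => if u i * v i < 0 then 1 else 0
  have htelescope : ∑ i, (f i - f (i - 1)) = 0 := by
    rw [Finset.sum_sub_distrib, sub_eq_zero]
    exact ((Equiv.subRight 1).sum_comp f).symm
  suffices (cyclicN n u : ℤ) ≤ cyclicN n v by exact_mod_cast this
  rw [← sub_nonneg, cyclicN_eq_sum, cyclicN_eq_sum, ← Finset.sum_sub_distrib]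
  refine htelescope.symm.trans_le <|
    Finset.sum_le_sum fun i _ => ite_sub_ite_le_of_mul_pos ?_ (hflip i)
  have hsq : 0 < (u i * v i * u (i - 1) * v (i - 1)) ^ 2 := by
    have := hu i; have := hv i; have := hu (i - 1); have := hv (i - 1)
    positivity
  calc (0 : ℝ)
      < (cyclicDelta n i * cyclicDelta n i) * (u i * v i * u (i - 1) * v (i - 1)) ^ 2 := by
        rwa [cyclicDelta_mul_self, one_mul]
    _ = _ := by ring

end Counting

section FrequentValues

variable {n : ℕ} [NeZero n]

lemma dense_cyclicLambda : Dense (cyclicLambda n) := by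
  have : cyclicLambda n = univ.pi fun _ => {0}ᶜ := by ext; simp [cyclicLambda]
  rw [this]
  exact dense_pi _ fun _ _ => dense_compl_singleton 0

lemma exists_of_frequently_cyclicN_eq {x₀ : Fin n → ℝ} {k : ℕ}
    (hk : ∃ᶠ y in 𝓝[cyclicLambda n] x₀, cyclicN n y = k) :
    ∃ z ∈ cyclicLambda n, (∀ i, x₀ i ≠ 0 → 0 < z i * x₀ i) ∧ cyclicN n z = k :=
  let ⟨z, hzk, hz, hzx₀⟩ := (hk.and_eventually (eventually_mem_nhdsWithin.and
    (mem_nhdsWithin_of_mem_nhds (eventually_mul_pos_nhds x₀)))).exists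
  ⟨z, hz, hzx₀, hzk⟩

lemma nonempty_frequently_cyclicN_eq (x₀ : Fin n → ℝ) :
    {k | ∃ᶠ y in 𝓝[cyclicLambda n] x₀, cyclicN n y = k}.Nonempty := by
  have : (𝓝[cyclicLambda n] x₀).NeBot :=
    mem_closure_iff_nhdsWithin_neBot.1 (dense_cyclicLambda x₀)
  by_contra hempty
  have : ∀ᶠ y in 𝓝[cyclicLambda n] x₀, ∀ k : Fin (n + 1), cyclicN n y ≠ k :=
    eventually_all.2 fun k => not_frequently.1 fun hk => hempty ⟨k, hk⟩
  obtain ⟨y, hy⟩ := this.exists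
  exact hy ⟨cyclicN n y, Nat.lt_succ_of_le (cyclicN_le y)⟩ rfl

lemma cyclicNm_le_cyclicNM (x₀ : Fin n → ℝ) : cyclicNm n x₀ ≤ cyclicNM n x₀ := by
  obtain ⟨k, hk⟩ := nonempty_frequently_cyclicN_eq x₀
  refine (Nat.sInf_le hk).trans (le_csSup ⟨n, fun j hj => ?_⟩ hk)
  obtain ⟨z, -, -, rfl⟩ := exists_of_frequently_cyclicN_eq hj
  exact cyclicN_le z

theorem cyclicN_le_cyclicNm {x₀ u : Fin n → ℝ} (hu : u ∈ cyclicLambda n)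
    (hsign : ∀ i, x₀ i ≠ 0 → 0 < u i * x₀ i)
    (hpos : ∀ i, x₀ i = 0 → 0 < cyclicDelta n i * u i * u (i - 1)) :
    cyclicN n u ≤ cyclicNm n x₀ := by
  refine le_csInf (nonempty_frequently_cyclicN_eq x₀) fun k hk => ?_
  obtain ⟨z, hz, hzsign, rfl⟩ := exists_of_frequently_cyclicN_eq hk
  refine cyclicN_le_cyclicN hu hz fun i huz _ => hpos i ?_
  by_contra hi
  exact huz.not_gt (mul_pos_of_mul_pos_of_mul_pos (hsign i hi) (hzsign i hi))

theorem cyclicNM_le_cyclicN {x₀ w : Fin n → ℝ} (hw : w ∈ cyclicLambda n)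
    (hsign : ∀ i, x₀ i ≠ 0 → 0 < w i * x₀ i)
    (hneg : ∀ i, x₀ i = 0 → cyclicDelta n i * w i * w (i - 1) < 0) :
    cyclicNM n x₀ ≤ cyclicN n w := by
  refine csSup_le (nonempty_frequently_cyclicN_eq x₀) fun k hk => ?_
  obtain ⟨z, hz, hzsign, rfl⟩ := exists_of_frequently_cyclicN_eq hk
  refine cyclicN_le_cyclicN hz hw fun i hzw hzw' => ?_
  have hi : x₀ i = 0 := by
    by_contra hi
    exact hzw.not_gt (mul_pos_of_mul_pos_of_mul_pos (hzsign i hi) (hsign i hi))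
  have hterms : (cyclicDelta n i * z i * z (i - 1)) * (cyclicDelta n i * w i * w (i - 1)) < 0 := by
    calc _ = (cyclicDelta n i * cyclicDelta n i) * ((z i * w i) * (z (i - 1) * w (i - 1))) := by
          ring
      _ < 0 := by rw [cyclicDelta_mul_self, one_mul]; exact mul_neg_of_neg_of_pos hzw hzw'
  exact pos_of_mul_neg_left hterms (hneg i hi).le

theorem cyclicNm_eq_and_cyclicNM_eq {y : Fin n → ℝ} (hy : y ∈ cyclicLambda n) :
    cyclicNm n y = cyclicN n y ∧ cyclicNM n y = cyclicN n y := by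
  have hle := cyclicN_le_cyclicNm hy (fun i _ => mul_self_pos.2 (hy i)) fun i h => absurd h (hy i)
  have hge := cyclicNM_le_cyclicN hy (fun i _ => mul_self_pos.2 (hy i)) fun i h => absurd h (hy i)
  have := cyclicNm_le_cyclicNM y
  constructor <;> omega

end FrequentValues

namespace LinCNF

variable {n : ℕ} [NeZero n] (S : LinCNF n) {x : ℝ → Fin n → ℝ}

def vectorField (t : ℝ) (y : Fin n → ℝ) : Fin n → ℝ :=
  fun i => S.diag t i * y i + S.sub t i * y (i - 1)

theorem exists_lipschitzWith_vectorField (a b : ℝ) :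
    ∃ K, ∀ t ∈ Icc a b, LipschitzWith K (S.vectorField t) := by
  have hcont : Continuous fun t => ‖S.diag t‖ + ‖S.sub t‖ :=
    (continuous_pi S.cont_diag).norm.add (continuous_pi S.cont_sub).norm
  obtain ⟨C, hC⟩ := (isCompact_Icc (a := a) (b := b)).exists_bound_of_continuousOn
    hcont.continuousOn
  refine ⟨C.toNNReal, fun t ht => LipschitzWith.of_dist_le_mul fun y z =>
    (dist_pi_le_iff (by positivity)).2 fun i => ?_⟩
  have hdiag := norm_le_pi_norm (S.diag t) i
  have hsub := norm_le_pi_norm (S.sub t) i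
  have hy := dist_le_pi_dist y z i
  have hy' := dist_le_pi_dist y z (i - 1)
  have hCt : ‖S.diag t‖ + ‖S.sub t‖ ≤ C.toNNReal :=
    (le_abs_self _).trans ((hC t ht).trans (le_max_left _ _))
  rw [Real.dist_eq] at hy hy' ⊢
  rw [Real.norm_eq_abs] at hdiag hsub
  calc |S.vectorField t y i - S.vectorField t z i|
      = |S.diag t i * (y i - z i) + S.sub t i * (y (i - 1) - z (i - 1))| := by
        simp only [vectorField]; ring_nf
    _ ≤ |S.diag t i| * |y i - z i| + |S.sub t i| * |y (i - 1) - z (i - 1)| :=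
        (abs_add_le _ _).trans_eq (by rw [abs_mul, abs_mul])
    _ ≤ ‖S.diag t‖ * dist y z + ‖S.sub t‖ * dist y z := by gcongr
    _ ≤ C.toNNReal * dist y z := by rw [← add_mul]; gcongr

theorem delta_mul_sub_pos (t : ℝ) (i : Fin n) :
    0 < cyclicDelta n i * S.sub t i := by
  unfold cyclicDelta
  split_ifs with hi
  · linarith [hi ▸ S.sub_neg t]
  · linarith [S.sub_pos t i hi]

variable {S}

theorem IsSolution.hasDerivAt (hsol : S.IsSolution x) (t : ℝ) :
    HasDerivAt x (S.vectorField t (x t)) t :=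
  hasDerivAt_pi.2 (hsol t)

theorem IsSolution.continuous (hsol : S.IsSolution x) : Continuous x :=
  continuous_iff_continuousAt.2 fun t => (hsol.hasDerivAt t).continuousAt

theorem IsSolution.eq_zero_of_apply_eq_zero (hsol : S.IsSolution x) {a : ℝ} (ha : x a = 0) :
    x = 0 := by
  funext t
  obtain ⟨K, hK⟩ := S.exists_lipschitzWith_vectorField (min a t - 1) (max a t + 1)
  have hzero : ∀ s, HasDerivAt (fun _ => 0) (S.vectorField s 0) s := fun s =>
    (hasDerivAt_const s (0 : Fin n → ℝ)).congr_deriv (by ext; simp [vectorField])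
  refine ODE_solution_unique_of_mem_Ioo (s := fun _ => univ)
    (fun s hs => (hK s (Ioo_subset_Icc_self hs)).lipschitzOnWith)
    (t₀ := a) ⟨?_, ?_⟩ (fun s _ => ⟨hsol.hasDerivAt s, trivial⟩)
    (fun s _ => ⟨hzero s, trivial⟩) ha ⟨?_, ?_⟩ <;>
  linarith [min_le_left a t, min_le_right a t, le_max_left a t, le_max_right a t]

/-- `c xᵢ` with `c = δᵢ x_{i−1}(t)` solves a scalar linear equation whose forcing term
`c a_{i,i−1} x_{i−1}` is positive on `(t₀, t]`, where `x_{i−1}` keeps the sign it has at `t`. -/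
theorem IsSolution.delta_mul_pos (hsol : S.IsSolution x) {t₀ t : ℝ} {i : Fin n}
    (hi : x t₀ i = 0) (ht : t₀ < t) (hne : ∀ s ∈ Ioc t₀ t, x s (i - 1) ≠ 0) :
    0 < cyclicDelta n i * x t i * x t (i - 1) := by
  set c := cyclicDelta n i * x t (i - 1)
  have hsign : ∀ s ∈ Ioc t₀ t, 0 < x t (i - 1) * x s (i - 1) := fun s hs =>
    isPreconnected_Ioc.mul_pos_of_ne_zero
      ((continuous_apply _).comp hsol.continuous).continuousOn hne
      (right_mem_Ioc.2 ht) hs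
  have := pos_of_hasDerivAt_linear (y := fun s => c * x s i)
    (h := fun s => c * S.sub s i * x s (i - 1)) (S.cont_diag i)
    (fun s => ((hsol s i).const_mul c).congr_deriv (by ring)) (by simp [hi]) ht
    fun s hs => by
      have := mul_pos (S.delta_mul_sub_pos s i) (hsign s (Ioo_subset_Ioc_self hs))
      simp only [c]; linarith
  simp only [c] at this; linarith

theorem IsSolution.delta_mul_neg (hsol : S.IsSolution x) {t₀ t : ℝ} {i : Fin n}
    (hi : x t₀ i = 0) (ht : t < t₀) (hne : ∀ s ∈ Ico t t₀, x s (i - 1) ≠ 0) :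
    cyclicDelta n i * x t i * x t (i - 1) < 0 := by
  set c := cyclicDelta n i * x t (i - 1)
  have hsign : ∀ s ∈ Ico t t₀, 0 < x t (i - 1) * x s (i - 1) := fun s hs =>
    isPreconnected_Ico.mul_pos_of_ne_zero
      ((continuous_apply _).comp hsol.continuous).continuousOn hne
      (left_mem_Ico.2 ht) hs
  have := neg_of_hasDerivAt_linear (y := fun s => c * x s i)
    (h := fun s => c * S.sub s i * x s (i - 1)) (S.cont_diag i)
    (fun s => ((hsol s i).const_mul c).congr_deriv (by ring)) (by simp [hi]) ht
    fun s hs => by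
      have := mul_pos (S.delta_mul_sub_pos s i) (hsign s (Ioo_subset_Ico_self hs))
      simp only [c]; linarith
  simp only [c] at this; linarith

theorem IsSolution.eventually_delta_mul_pos (hsol : S.IsSolution x) {t₀ : ℝ} {i : Fin n}
    (hi : x t₀ i = 0) (hne : ∀ᶠ t in 𝓝[>] t₀, x t (i - 1) ≠ 0) :
    ∀ᶠ t in 𝓝[>] t₀, 0 < cyclicDelta n i * x t i * x t (i - 1) := by
  obtain ⟨b, hb, hsub⟩ := mem_nhdsGT_iff_exists_Ioo_subset.1 hne
  filter_upwards [Ioo_mem_nhdsGT hb] with t ht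
  exact hsol.delta_mul_pos hi ht.1 fun s hs => hsub ⟨hs.1, hs.2.trans_lt ht.2⟩

theorem IsSolution.eventually_delta_mul_neg (hsol : S.IsSolution x) {t₀ : ℝ} {i : Fin n}
    (hi : x t₀ i = 0) (hne : ∀ᶠ t in 𝓝[<] t₀, x t (i - 1) ≠ 0) :
    ∀ᶠ t in 𝓝[<] t₀, cyclicDelta n i * x t i * x t (i - 1) < 0 := by
  obtain ⟨b, hb, hsub⟩ := mem_nhdsLT_iff_exists_Ioo_subset.1 hne
  filter_upwards [Ioo_mem_nhdsLT hb] with t ht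
  exact hsol.delta_mul_neg hi ht.2 fun s hs => hsub ⟨ht.1.trans_le hs.1, hs.2⟩

theorem IsSolution.eventually_nhdsGT (hsol : S.IsSolution x) {t₀ : ℝ} (hx₀ : x t₀ ≠ 0) :
    ∀ᶠ t in 𝓝[>] t₀, x t ∈ cyclicLambda n ∧ (∀ i, x t₀ i ≠ 0 → 0 < x t i * x t₀ i) ∧
      ∀ i, x t₀ i = 0 → 0 < cyclicDelta n i * x t i * x t (i - 1) := by
  have hne := forall_eventually_ne_zero_of_step nhdsWithin_le_nhds hsol.continuous.continuousAt
    hx₀ fun i hi h => (hsol.eventually_delta_mul_pos hi h).mono fun t ht =>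
      right_ne_zero_of_mul (left_ne_zero_of_mul ht.ne')
  refine (eventually_all.2 hne).and <| (((hsol.continuous.tendsto t₀).mono_left
    nhdsWithin_le_nhds).eventually (eventually_mul_pos_nhds _)).and <|
    eventually_all.2 fun i => ?_
  by_cases hi : x t₀ i = 0
  · exact (hsol.eventually_delta_mul_pos hi (hne (i - 1))).mono fun _ h _ => h
  · exact Eventually.of_forall fun _ h => absurd h hi

theorem IsSolution.eventually_nhdsLT (hsol : S.IsSolution x) {t₀ : ℝ} (hx₀ : x t₀ ≠ 0) :
    ∀ᶠ t in 𝓝[<] t₀, x t ∈ cyclicLambda n ∧ (∀ i, x t₀ i ≠ 0 → 0 < x t i * x t₀ i) ∧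
      ∀ i, x t₀ i = 0 → cyclicDelta n i * x t i * x t (i - 1) < 0 := by
  have hne := forall_eventually_ne_zero_of_step nhdsWithin_le_nhds hsol.continuous.continuousAt
    hx₀ fun i hi h => (hsol.eventually_delta_mul_neg hi h).mono fun t ht =>
      right_ne_zero_of_mul (left_ne_zero_of_mul ht.ne)
  refine (eventually_all.2 hne).and <| (((hsol.continuous.tendsto t₀).mono_left
    nhdsWithin_le_nhds).eventually (eventually_mul_pos_nhds _)).and <|
    eventually_all.2 fun i => ?_
  by_cases hi : x t₀ i = 0
  · exact (hsol.eventually_delta_mul_neg hi (hne (i - 1))).mono fun _ h _ => h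
  · exact Eventually.of_forall fun _ h => absurd h hi

end LinCNF

theorem stmt1_general (n : ℕ) [NeZero n] (S : LinCNF n) (x : ℝ → Fin n → ℝ)
    (hsol : S.IsSolution x) (hnontriv : ¬ ∀ t, x t = 0)
    (t₀ : ℝ) (h₀ : x t₀ ∉ cyclicGood n) :
    ∃ ε₀ > (0 : ℝ), ∀ ε : ℝ, 0 < ε → ε < ε₀ →
      x (t₀ + ε) ∈ cyclicGood n ∧ x (t₀ - ε) ∈ cyclicGood n ∧
      cyclicNm n (x (t₀ + ε)) < cyclicNm n (x (t₀ - ε)) := by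
  have hx₀ : x t₀ ≠ 0 := fun h => hnontriv (congrFun (hsol.eq_zero_of_apply_eq_zero h))
  obtain ⟨ε₀, hε₀, hsides⟩ := exists_pos_forall_of_eventually_nhdsGT_nhdsLT
    (hsol.eventually_nhdsGT hx₀) (hsol.eventually_nhdsLT hx₀)
  refine ⟨ε₀, hε₀, fun ε hε hεε₀ => ?_⟩
  obtain ⟨⟨hu, husign, hupos⟩, ⟨hw, hwsign, hwneg⟩⟩ := hsides ε hε hεε₀
  obtain ⟨hum, huM⟩ := cyclicNm_eq_and_cyclicNM_eq hu
  obtain ⟨hwm, hwM⟩ := cyclicNm_eq_and_cyclicNM_eq hw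
  refine ⟨hum.trans huM.symm, hwm.trans hwM.symm, ?_⟩
  calc cyclicNm n (x (t₀ + ε)) = cyclicN n (x (t₀ + ε)) := hum
    _ ≤ cyclicNm n (x t₀) := cyclicN_le_cyclicNm hu husign hupos
    _ < cyclicNM n (x t₀) := (cyclicNm_le_cyclicNM _).lt_of_ne h₀
    _ ≤ cyclicN n (x (t₀ - ε)) := cyclicNM_le_cyclicN hw hwsign hwneg
    _ = cyclicNm n (x (t₀ - ε)) := hwm.symm

/-- If `x(t₀) ∉ 𝒩` then for all small `ε > 0` one has
`x(t₀ ± ε) ∈ 𝒩` and `N(x(t₀ + ε)) < N(x(t₀ − ε))`. -/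
theorem stmt1 (n : ℕ) [NeZero n] (hn : 2 ≤ n) (S : LinCNF n) (x : ℝ → Fin n → ℝ)
    (hsol : S.IsSolution x) (hnontriv : ¬ ∀ t, x t = 0)
    (t₀ : ℝ) (h₀ : x t₀ ∉ cyclicGood n) :
    ∃ ε₀ > (0 : ℝ), ∀ ε : ℝ, 0 < ε → ε < ε₀ →
      x (t₀ + ε) ∈ cyclicGood n ∧ x (t₀ - ε) ∈ cyclicGood n ∧
      cyclicNm n (x (t₀ + ε)) < cyclicNm n (x (t₀ - ε)) :=
  stmt1_general n S x hsol hnontriv t₀ h₀
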